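/- Let H, K be Hilbert spaces, N : H → K compact linear with dense range, and h ∈ K with h ≠ 0. Define G : (0,∞) → ℝ by G(α) = ‖N φ_α - h‖² - ε², where φ_α = (αI + N*N)⁻¹N*h and 0 < ε < ‖h‖. Then α ↦ ‖Nφ_α - h‖² is continuous and monotonically increasing on (0,∞), tends to ‖h‖² as α → ∞, and the discrepancy G has at least one zero if lim_{α→0⁺} ‖Nφ_α - h‖ < ε. -/

import Mathlib

open Filter Set Topology
open scoped InnerProductSpace

/-! The normal equation `α φ + N* N φ = N* h` is the Euler–Lagrange equation of the Tikhonov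
functional `‖N ψ - h‖² + α ‖ψ‖²`, which is convex, so `φ_α` minimises it. Comparing minimality at
two parameters shows that `‖φ_α‖` decreases and the residual increases with `α`. Subtracting two
normal equations gives `α ‖φ_α - φ_β‖ ≤ |β - α| ‖φ_β‖`, hence continuity, and `α ‖φ_α‖ ≤ ‖N‖ ‖h‖`
forces `N φ_α → 0` as `α → ∞`. The zero of the discrepancy is then given by the intermediate value
theorem on the connected set `(0, ∞)`. -/

lemma mul_le_of_mul_sq_le_mul {a b t : ℝ} (hb : 0 ≤ b) (ht : 0 ≤ t) (h : a * t ^ 2 ≤ b * t) :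
    a * t ≤ b := by
  rcases ht.eq_or_lt with rfl | ht
  · simpa using hb
  · exact le_of_mul_le_mul_right (by nlinarith) ht

section Tikhonov

variable {𝕜 H K : Type*} [RCLike 𝕜]
  [NormedAddCommGroup H] [InnerProductSpace 𝕜 H] [CompleteSpace H]
  [NormedAddCommGroup K] [InnerProductSpace 𝕜 K] [CompleteSpace K]

def IsTikhonovSolution (N : H →L[𝕜] K) (h : K) (α : ℝ) (x : H) : Prop :=
  (α : 𝕜) • x + ContinuousLinearMap.adjoint N (N x) = ContinuousLinearMap.adjoint N h

def tikhonovFunctional (N : H →L[𝕜] K) (h : K) (α : ℝ) (x : H) : ℝ :=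
  ‖N x - h‖ ^ 2 + α * ‖x‖ ^ 2

variable {N : H →L[𝕜] K} {h : K} {α β : ℝ} {x y : H}

namespace IsTikhonovSolution

theorem re_inner_residual_add_eq_zero (hx : IsTikhonovSolution N h α x) (w : H) :
    RCLike.re ⟪N x - h, N w⟫_𝕜 + α * RCLike.re ⟪x, w⟫_𝕜 = 0 := by
  have := congrArg (fun v => RCLike.re ⟪v, w⟫_𝕜) hx
  simp only [inner_add_left, inner_smul_left, RCLike.conj_ofReal, map_add, RCLike.re_ofReal_mul,
    ContinuousLinearMap.adjoint_inner_left] at this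
  rw [inner_sub_left, map_sub]
  linarith

theorem mul_norm_le (hx : IsTikhonovSolution N h α x) : α * ‖x‖ ≤ ‖N‖ * ‖h‖ := by
  have hid := hx.re_inner_residual_add_eq_zero x
  rw [inner_sub_left, map_sub, inner_self_eq_norm_sq, inner_self_eq_norm_sq] at hid
  have hcross : RCLike.re ⟪h, N x⟫_𝕜 ≤ ‖N‖ * ‖h‖ * ‖x‖ :=
    calc RCLike.re ⟪h, N x⟫_𝕜 ≤ ‖h‖ * ‖N x‖ := re_inner_le_norm h (N x)
      _ ≤ ‖h‖ * (‖N‖ * ‖x‖) := by gcongr; exact N.le_opNorm x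
      _ = ‖N‖ * ‖h‖ * ‖x‖ := by ring
  refine mul_le_of_mul_sq_le_mul (by positivity) (norm_nonneg x) ?_
  nlinarith [sq_nonneg ‖N x‖]

theorem tikhonovFunctional_le (hx : IsTikhonovSolution N h α x) (hα : 0 ≤ α) (ψ : H) :
    tikhonovFunctional N h α x ≤ tikhonovFunctional N h α ψ := by
  obtain ⟨w, rfl⟩ : ∃ w, ψ = x + w := ⟨ψ - x, by abel⟩
  have hid := hx.re_inner_residual_add_eq_zero w
  have hres : N (x + w) - h = (N x - h) + N w := by rw [map_add]; abel
  unfold tikhonovFunctional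
  rw [hres, @norm_add_sq 𝕜, @norm_add_sq 𝕜 _ _ _ _ x w]
  nlinarith [sq_nonneg ‖N w‖, mul_nonneg hα (sq_nonneg ‖w‖)]

theorem mul_norm_sub_le (hx : IsTikhonovSolution N h α x) (hy : IsTikhonovSolution N h β y) :
    α * ‖x - y‖ ≤ |β - α| * ‖y‖ := by
  obtain ⟨w, rfl⟩ : ∃ w, x = y + w := ⟨x - y, by abel⟩
  have hidx := hx.re_inner_residual_add_eq_zero w
  have hidy := hy.re_inner_residual_add_eq_zero w
  have hres : N (y + w) - h = (N y - h) + N w := by rw [map_add]; abel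
  rw [hres, inner_add_left, inner_add_left, map_add, map_add, inner_self_eq_norm_sq,
    inner_self_eq_norm_sq] at hidx
  have hcross : (β - α) * RCLike.re ⟪y, w⟫_𝕜 ≤ |β - α| * ‖y‖ * ‖w‖ :=
    calc (β - α) * RCLike.re ⟪y, w⟫_𝕜 ≤ |β - α| * |RCLike.re ⟪y, w⟫_𝕜| := by
          rw [← abs_mul]; exact le_abs_self _
      _ ≤ |β - α| * (‖y‖ * ‖w‖) := by
          gcongr; exact (RCLike.abs_re_le_norm _).trans (norm_inner_le_norm y w)
      _ = |β - α| * ‖y‖ * ‖w‖ := by ring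
  rw [add_sub_cancel_left]
  refine mul_le_of_mul_sq_le_mul (by positivity) (norm_nonneg w) ?_
  nlinarith [sq_nonneg ‖N w‖]

theorem norm_residual_sq_le (hx : IsTikhonovSolution N h α x) (hy : IsTikhonovSolution N h β y)
    (hα : 0 ≤ α) (hαβ : α < β) : ‖N x - h‖ ^ 2 ≤ ‖N y - h‖ ^ 2 := by
  have hxy := hx.tikhonovFunctional_le hα y
  have hyx := hy.tikhonovFunctional_le (hα.trans hαβ.le) x
  unfold tikhonovFunctional at hxy hyx
  have hnorm : ‖y‖ ^ 2 ≤ ‖x‖ ^ 2 := by nlinarith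
  nlinarith

end IsTikhonovSolution

variable {φ : ℝ → H}

theorem continuousOn_of_isTikhonovSolution
    (hφ : ∀ α : ℝ, 0 < α → IsTikhonovSolution N h α (φ α)) :
    ContinuousOn φ (Ioi 0) := by
  intro β (hβ : 0 < β)
  rw [ContinuousWithinAt, tendsto_iff_norm_sub_tendsto_zero]
  have hbound : ContinuousAt (fun α : ℝ => |β - α| * ‖φ β‖ / α) β := by
    fun_prop (disch := exact hβ.ne')
  refine squeeze_zero' (g := fun α : ℝ => |β - α| * ‖φ β‖ / α)
    (Eventually.of_forall fun _ => norm_nonneg _) ?_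
    (by simpa using (hbound.continuousWithinAt (s := Ioi 0)).tendsto)
  filter_upwards [self_mem_nhdsWithin] with α (hα : 0 < α)
  rw [le_div_iff₀ hα, mul_comm]
  exact (hφ α hα).mul_norm_sub_le (hφ β hβ)

theorem monotoneOn_norm_residual_sq (hφ : ∀ α : ℝ, 0 < α → IsTikhonovSolution N h α (φ α)) :
    MonotoneOn (fun α => ‖N (φ α) - h‖ ^ 2) (Ioi 0) := by
  intro a (ha : 0 < a) b (hb : 0 < b) hab
  rcases hab.eq_or_lt with rfl | hab
  · rfl
  · exact (hφ a ha).norm_residual_sq_le (hφ b hb) ha.le hab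

theorem tendsto_map_tikhonovSolution_atTop_zero
    (hφ : ∀ α : ℝ, 0 < α → IsTikhonovSolution N h α (φ α)) :
    Tendsto (fun α => N (φ α)) atTop (𝓝 0) := by
  rw [tendsto_zero_iff_norm_tendsto_zero]
  refine squeeze_zero' (Eventually.of_forall fun _ => norm_nonneg _) ?_
    (tendsto_const_nhds.div_atTop tendsto_id : Tendsto (fun α : ℝ => ‖N‖ * (‖N‖ * ‖h‖) / α) _ _)
  filter_upwards [eventually_gt_atTop 0] with α hα
  rw [le_div_iff₀ hα]
  calc ‖N (φ α)‖ * α ≤ ‖N‖ * ‖φ α‖ * α := by gcongr; exact N.le_opNorm _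
    _ = ‖N‖ * (α * ‖φ α‖) := by ring
    _ ≤ ‖N‖ * (‖N‖ * ‖h‖) :=
      mul_le_mul_of_nonneg_left (hφ α hα).mul_norm_le (norm_nonneg _)

end Tikhonov

theorem stmt7_general {H K : Type*}
    [NormedAddCommGroup H] [InnerProductSpace ℂ H] [CompleteSpace H]
    [NormedAddCommGroup K] [InnerProductSpace ℂ K] [CompleteSpace K]
    (N : H →L[ℂ] K)
    (h : K) (ε : ℝ) (hεh : ε < ‖h‖)
    (φ : ℝ → H)
    (hφ : ∀ α : ℝ, 0 < α →
      (α : ℂ) • φ α + ContinuousLinearMap.adjoint N (N (φ α))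
        = ContinuousLinearMap.adjoint N h) :
    ContinuousOn (fun α => ‖N (φ α) - h‖ ^ 2) (Set.Ioi 0) ∧
    MonotoneOn (fun α => ‖N (φ α) - h‖ ^ 2) (Set.Ioi 0) ∧
    Tendsto (fun α => ‖N (φ α) - h‖ ^ 2) atTop (nhds (‖h‖ ^ 2)) ∧
    (∀ L : ℝ, Tendsto (fun α => ‖N (φ α) - h‖) (nhdsWithin 0 (Set.Ioi 0)) (nhds L) →
      L < ε → ∃ α : ℝ, 0 < α ∧ ‖N (φ α) - h‖ ^ 2 - ε ^ 2 = 0) := by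
  have hres : ContinuousOn (fun α => ‖N (φ α) - h‖) (Ioi 0) :=
    (N.continuous.sub continuous_const).norm.comp_continuousOn
      (continuousOn_of_isTikhonovSolution hφ)
  have hlim : Tendsto (fun α => ‖N (φ α) - h‖) atTop (𝓝 ‖h‖) := by
    simpa using ((tendsto_map_tikhonovSolution_atTop_zero hφ).sub_const h).norm
  refine ⟨hres.pow 2, monotoneOn_norm_residual_sq hφ, hlim.pow 2, fun L hL hLε => ?_⟩
  obtain ⟨α₀, hα₀ε, hα₀⟩ := ((hL.eventually_lt_const hLε).and self_mem_nhdsWithin).exists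
  obtain ⟨α₁, hα₁ε, hα₁⟩ := ((hlim.eventually_const_lt hεh).and (eventually_gt_atTop 0)).exists
  obtain ⟨α, hα, hαε⟩ :=
    isPreconnected_Ioi.intermediate_value hα₀ hα₁ hres ⟨hα₀ε.le, hα₁ε.le⟩
  exact ⟨α, hα, by simp only at hαε; rw [hαε, sub_self]⟩

theorem stmt7 {H K : Type*}
    [NormedAddCommGroup H] [InnerProductSpace ℂ H] [CompleteSpace H]
    [NormedAddCommGroup K] [InnerProductSpace ℂ K] [CompleteSpace K]
    (N : H →L[ℂ] K) (hcomp : IsCompactOperator N) (hdense : DenseRange N)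
    (h : K) (hh : h ≠ 0) (ε : ℝ) (hε : 0 < ε) (hεh : ε < ‖h‖)
    (φ : ℝ → H)
    (hφ : ∀ α : ℝ, 0 < α →
      (α : ℂ) • φ α + ContinuousLinearMap.adjoint N (N (φ α))
        = ContinuousLinearMap.adjoint N h) :
    ContinuousOn (fun α => ‖N (φ α) - h‖ ^ 2) (Set.Ioi 0) ∧
    MonotoneOn (fun α => ‖N (φ α) - h‖ ^ 2) (Set.Ioi 0) ∧
    Tendsto (fun α => ‖N (φ α) - h‖ ^ 2) atTop (nhds (‖h‖ ^ 2)) ∧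
    (∀ L : ℝ, Tendsto (fun α => ‖N (φ α) - h‖) (nhdsWithin 0 (Set.Ioi 0)) (nhds L) →
      L < ε → ∃ α : ℝ, 0 < α ∧ ‖N (φ α) - h‖ ^ 2 - ε ^ 2 = 0) :=
  stmt7_general N h ε hεh φ hφ
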